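/- Local well-posedness of the comparison integral equation (Lemma 4.5(a)): Fix real numbers L₂ < L₃ and c > 0. Then there exists T > 0 and a solution f of the integral equation on [L₂,L₃]×[0,T); moreover, any two solutions of the integral equation on a common domain [L₂,L₃]×[0,T'] coincide. -/

import Mathlib

set_option maxHeartbeats 1000000


open MeasureTheory

/-- `f` is a solution of the comparison integral equation
`f(z,t) = 1/2 + c·∫₀ᵗ∫₀ˢ exp(∫_{L₂}^z f(y,r) dy) dr ds` on `[L₂,L₃] × S`. -/
def IsSolIntEq (L₂ L₃ c : ℝ) (S : Set ℝ) (f : ℝ → ℝ → ℝ) : Prop :=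
  ContinuousOn (fun p : ℝ × ℝ => f p.1 p.2) (Set.Icc L₂ L₃ ×ˢ S) ∧
  ∀ z ∈ Set.Icc L₂ L₃, ∀ t ∈ S,
    f z t = 1 / 2 + c * ∫ s in (0:ℝ)..t, ∫ r in (0:ℝ)..s, Real.exp (∫ y in L₂..z, f y r)


open MeasureTheory Set intervalIntegral Filter

namespace IntEqWP

lemma exp_lip {a b C : ℝ} (ha : a ≤ C) (hb : b ≤ C) :
    |Real.exp a - Real.exp b| ≤ Real.exp C * |a - b| := by
  wlog h : b ≤ a generalizing a b
  · rw [abs_sub_comm, abs_sub_comm a b]; exact this hb ha (le_of_not_ge h)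
  rw [abs_of_nonneg (sub_nonneg.2 (Real.exp_le_exp.2 h)), abs_of_nonneg (sub_nonneg.2 h)]
  have h1 : (1 : ℝ) - Real.exp (b - a) ≤ a - b := by
    have := Real.add_one_le_exp (b - a); linarith
  have h2 : Real.exp a - Real.exp b = Real.exp a * (1 - Real.exp (b - a)) := by
    rw [mul_sub, mul_one, ← Real.exp_add]; ring_nf
  rw [h2]
  calc Real.exp a * (1 - Real.exp (b - a)) ≤ Real.exp a * (a - b) :=
        mul_le_mul_of_nonneg_left h1 (Real.exp_nonneg a)
    _ ≤ Real.exp C * (a - b) :=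
        mul_le_mul_of_nonneg_right (Real.exp_le_exp.2 ha) (by linarith)

lemma min_lip (Δ x y : ℝ) : |min Δ x - min Δ y| ≤ |x - y| := by
  rcases le_total Δ x with h1 | h1 <;> rcases le_total Δ y with h2 | h2 <;>
    simp [min_eq_left, min_eq_right, h1, h2, abs_le] <;>
    cases' abs_cases (x - y) with h h <;> constructor <;> linarith [h.1]

/-- continuity of the inner parametric integral -/
lemma cont_inner {α : Type*} [TopologicalSpace α] {G : α × ℝ → ℝ} (hG : Continuous G) :
    Continuous fun q : α × ℝ => ∫ r in (0:ℝ)..q.2, G (q.1, r) := by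
  apply intervalIntegral.continuous_parametric_intervalIntegral_of_continuous
    (f := fun (q : α × ℝ) r => G (q.1, r)) ?_ continuous_snd
  exact hG.comp (continuous_fst.fst.prodMk continuous_snd)

lemma cont_double {G : ℝ × ℝ → ℝ} (hG : Continuous G) :
    Continuous fun p : ℝ × ℝ => ∫ s in (0:ℝ)..p.2, ∫ r in (0:ℝ)..s, G (p.1, r) :=
  cont_inner (G := fun q : ℝ × ℝ => ∫ r in (0:ℝ)..q.2, G (q.1, r)) (cont_inner hG)

lemma cont_I {α : Type*} [TopologicalSpace α] {G : ℝ × α → ℝ} (hG : Continuous G) (L₂ : ℝ) :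
    Continuous fun q : ℝ × α => ∫ y in L₂..q.1, G (y, q.2) := by
  apply intervalIntegral.continuous_parametric_intervalIntegral_of_continuous
    (f := fun (q : ℝ × α) y => G (y, q.2)) ?_ continuous_fst
  exact hG.comp (continuous_snd.prodMk continuous_fst.snd)

lemma double_bound {G : ℝ → ℝ} {Cg τ : ℝ} (hτ : 0 ≤ τ)
    (hb : ∀ r ∈ Set.Ioc (0:ℝ) τ, |G r| ≤ Cg) :
    |∫ s in (0:ℝ)..τ, ∫ r in (0:ℝ)..s, G r| ≤ Cg * τ ^ 2 := by
  rcases eq_or_lt_of_le hτ with rfl | hτ'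
  · simp
  have hCg : 0 ≤ Cg := le_trans (abs_nonneg _) (hb τ ⟨hτ', le_refl τ⟩)
  have inner : ∀ s ∈ Set.Ioc (0:ℝ) τ, |∫ r in (0:ℝ)..s, G r| ≤ Cg * τ := by
    intro s hs
    have : |∫ r in (0:ℝ)..s, G r| ≤ Cg * |s - 0| := by
      rw [← Real.norm_eq_abs]
      apply intervalIntegral.norm_integral_le_of_norm_le_const
      intro r hr
      rw [uIoc_of_le hs.1.le] at hr
      exact (Real.norm_eq_abs _) ▸ hb r ⟨hr.1, hr.2.trans hs.2⟩
    refine this.trans ?_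
    rw [sub_zero, abs_of_pos hs.1]
    exact mul_le_mul_of_nonneg_left hs.2 hCg
  have : |∫ s in (0:ℝ)..τ, ∫ r in (0:ℝ)..s, G r| ≤ Cg * τ * |τ - 0| := by
    rw [← Real.norm_eq_abs]
    apply intervalIntegral.norm_integral_le_of_norm_le_const
    intro s hs
    rw [uIoc_of_le hτ] at hs
    exact (Real.norm_eq_abs _) ▸ inner s hs
  rw [sub_zero, abs_of_pos hτ'] at this
  nlinarith [this]

noncomputable section

/-- clamp to an interval -/
def clamp (a b : ℝ) (h : a ≤ b) (x : ℝ) : ℝ := (Set.projIcc a b h x : ℝ)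

lemma clamp_cont (a b : ℝ) (h : a ≤ b) : Continuous (clamp a b h) :=
  continuous_subtype_val.comp continuous_projIcc

lemma clamp_mem (a b : ℝ) (h : a ≤ b) (x : ℝ) : clamp a b h x ∈ Set.Icc a b :=
  (Set.projIcc a b h x).2

lemma clamp_eq {a b : ℝ} (h : a ≤ b) {x : ℝ} (hx : x ∈ Set.Icc a b) : clamp a b h x = x := by
  simp [clamp, Set.projIcc_of_mem h hx]

abbrev X := BoundedContinuousFunction (ℝ × ℝ) ℝ

variable {L₂ L₃ T : ℝ}

/-- inner spatial integral of the clamped function -/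
def It (hL : L₂ ≤ L₃) (hT : (0:ℝ) ≤ T) (f : X) (z r : ℝ) : ℝ :=
  ∫ y in L₂..clamp L₂ L₃ hL z, f (clamp L₂ L₃ hL y, clamp 0 T hT r)

/-- truncated exponential nonlinearity -/
def Theta (hL : L₂ ≤ L₃) (hT : (0:ℝ) ≤ T) (f : X) (p : ℝ × ℝ) : ℝ :=
  Real.exp (min (L₃ - L₂) (It hL hT f p.1 p.2))

/-- the Picard operator, pointwise -/
def Psi0 (hL : L₂ ≤ L₃) (hT : (0:ℝ) ≤ T) (c : ℝ) (f : X) (p : ℝ × ℝ) : ℝ :=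
  1/2 + c * ∫ s in (0:ℝ)..clamp 0 T hT p.2, ∫ r in (0:ℝ)..s, Theta hL hT f (p.1, r)

variable (hL : L₂ ≤ L₃) (hT : (0:ℝ) ≤ T)

lemma base_cont (f : X) : Continuous fun q : ℝ × ℝ => f (clamp L₂ L₃ hL q.1, clamp 0 T hT q.2) :=
  f.continuous.comp (((clamp_cont _ _ hL).comp continuous_fst).prodMk
    ((clamp_cont _ _ hT).comp continuous_snd))

lemma It_cont (f : X) : Continuous fun q : ℝ × ℝ => It hL hT f q.1 q.2 := by
  unfold It
  apply intervalIntegral.continuous_parametric_intervalIntegral_of_continuous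
    (f := fun (q : ℝ × ℝ) y => f (clamp L₂ L₃ hL y, clamp 0 T hT q.2)) ?_
    ((clamp_cont _ _ hL).comp continuous_fst)
  exact f.continuous.comp (((clamp_cont _ _ hL).comp continuous_snd).prodMk
    ((clamp_cont _ _ hT).comp continuous_fst.snd))

lemma It_y_integrable (f : X) (r a b : ℝ) :
    IntervalIntegrable (fun y => f (clamp L₂ L₃ hL y, clamp 0 T hT r)) volume a b :=
  (f.continuous.comp ((clamp_cont _ _ hL).prodMk continuous_const)).intervalIntegrable _ _

lemma It_le (f : X) {M : ℝ} (hM : 0 ≤ M) (hf : ∀ q, |f q| ≤ M) (z r : ℝ) :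
    |It hL hT f z r| ≤ M * (L₃ - L₂) := by
  have h1 : |It hL hT f z r| ≤ M * |clamp L₂ L₃ hL z - L₂| := by
    rw [← Real.norm_eq_abs]
    apply intervalIntegral.norm_integral_le_of_norm_le_const
    intro y _
    exact (Real.norm_eq_abs _) ▸ hf _
  refine h1.trans (mul_le_mul_of_nonneg_left ?_ hM)
  have := clamp_mem L₂ L₃ hL z
  rw [abs_of_nonneg (by linarith [this.1])]
  linarith [this.2]

lemma It_dist (f g : X) (z r : ℝ) :
    |It hL hT f z r - It hL hT g z r| ≤ dist f g * (L₃ - L₂) := by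
  have hsub : It hL hT f z r - It hL hT g z r
      = ∫ y in L₂..clamp L₂ L₃ hL z,
          (f (clamp L₂ L₃ hL y, clamp 0 T hT r) - g (clamp L₂ L₃ hL y, clamp 0 T hT r)) := by
    rw [It, It, intervalIntegral.integral_sub (It_y_integrable hL hT f r _ _)
      (It_y_integrable hL hT g r _ _)]
  rw [hsub]
  have h1 : |∫ y in L₂..clamp L₂ L₃ hL z,
      (f (clamp L₂ L₃ hL y, clamp 0 T hT r) - g (clamp L₂ L₃ hL y, clamp 0 T hT r))|
      ≤ dist f g * |clamp L₂ L₃ hL z - L₂| := by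
    rw [← Real.norm_eq_abs]
    apply intervalIntegral.norm_integral_le_of_norm_le_const
    intro y _
    rw [Real.norm_eq_abs, ← Real.dist_eq]
    exact BoundedContinuousFunction.dist_coe_le_dist _
  refine h1.trans (mul_le_mul_of_nonneg_left ?_ dist_nonneg)
  have := clamp_mem L₂ L₃ hL z
  rw [abs_of_nonneg (by linarith [this.1])]
  linarith [this.2]

lemma Theta_cont (f : X) : Continuous (Theta hL hT f) :=
  Real.continuous_exp.comp (continuous_const.min (It_cont hL hT f))

lemma Theta_le (f : X) (p : ℝ × ℝ) : |Theta hL hT f p| ≤ Real.exp (L₃ - L₂) := by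
  rw [Theta, abs_of_pos (Real.exp_pos _)]
  exact Real.exp_le_exp.2 (min_le_left _ _)

lemma Theta_dist (f g : X) (p : ℝ × ℝ) :
    |Theta hL hT f p - Theta hL hT g p|
      ≤ Real.exp (L₃ - L₂) * (dist f g * (L₃ - L₂)) := by
  rw [Theta, Theta]
  calc |Real.exp (min (L₃ - L₂) (It hL hT f p.1 p.2))
        - Real.exp (min (L₃ - L₂) (It hL hT g p.1 p.2))|
      ≤ Real.exp (L₃ - L₂) * |min (L₃ - L₂) (It hL hT f p.1 p.2)
          - min (L₃ - L₂) (It hL hT g p.1 p.2)| :=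
        exp_lip (min_le_left _ _) (min_le_left _ _)
    _ ≤ Real.exp (L₃ - L₂) * |It hL hT f p.1 p.2 - It hL hT g p.1 p.2| :=
        mul_le_mul_of_nonneg_left (min_lip _ _ _) (Real.exp_nonneg _)
    _ ≤ Real.exp (L₃ - L₂) * (dist f g * (L₃ - L₂)) :=
        mul_le_mul_of_nonneg_left (It_dist hL hT f g _ _) (Real.exp_nonneg _)

lemma Psi0_cont (c : ℝ) (f : X) : Continuous (Psi0 hL hT c f) := by
  unfold Psi0
  apply continuous_const.add
  apply continuous_const.mul
  apply intervalIntegral.continuous_parametric_intervalIntegral_of_continuous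
    (f := fun (p : ℝ × ℝ) s => ∫ r in (0:ℝ)..s, Theta hL hT f (p.1, r)) ?_
    ((clamp_cont _ _ hT).comp continuous_snd)
  exact cont_inner (G := fun q : (ℝ × ℝ) × ℝ => Theta hL hT f (q.1.1, q.2))
    ((Theta_cont hL hT f).comp (continuous_fst.fst.prodMk continuous_snd))

lemma Psi0_norm (c : ℝ) (hc : 0 ≤ c) (f : X) (p : ℝ × ℝ) :
    ‖Psi0 hL hT c f p‖ ≤ 1/2 + c * (Real.exp (L₃ - L₂) * T ^ 2) := by
  have hm := clamp_mem 0 T hT p.2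
  have hdb : |∫ s in (0:ℝ)..clamp 0 T hT p.2, ∫ r in (0:ℝ)..s, Theta hL hT f (p.1, r)|
      ≤ Real.exp (L₃ - L₂) * (clamp 0 T hT p.2) ^ 2 :=
    double_bound hm.1 (fun r _ => Theta_le hL hT f _)
  have h2 : Real.exp (L₃ - L₂) * (clamp 0 T hT p.2) ^ 2 ≤ Real.exp (L₃ - L₂) * T ^ 2 := by
    apply mul_le_mul_of_nonneg_left ?_ (Real.exp_nonneg _)
    exact pow_le_pow_left₀ hm.1 hm.2 2
  rw [Real.norm_eq_abs, Psi0]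
  calc |1/2 + c * ∫ s in (0:ℝ)..clamp 0 T hT p.2, ∫ r in (0:ℝ)..s, Theta hL hT f (p.1, r)|
      ≤ |(1/2 : ℝ)| + |c * ∫ s in (0:ℝ)..clamp 0 T hT p.2, ∫ r in (0:ℝ)..s, Theta hL hT f (p.1, r)| :=
        abs_add_le _ _
    _ = 1/2 + |c * ∫ s in (0:ℝ)..clamp 0 T hT p.2, ∫ r in (0:ℝ)..s, Theta hL hT f (p.1, r)| := by
        norm_num
    _ ≤ 1/2 + c * (Real.exp (L₃ - L₂) * T ^ 2) := by
        rw [abs_mul, abs_of_nonneg hc]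
        exact (add_le_add_iff_left _).2 (mul_le_mul_of_nonneg_left (hdb.trans h2) hc)

lemma Psi0_dist (c : ℝ) (hc : 0 ≤ c) (f g : X) (p : ℝ × ℝ) :
    |Psi0 hL hT c f p - Psi0 hL hT c g p|
      ≤ c * (Real.exp (L₃ - L₂) * (dist f g * (L₃ - L₂))) * T ^ 2 := by
  have hm := clamp_mem 0 T hT p.2
  have hfint : ∀ (h : X) (s : ℝ), IntervalIntegrable (fun r => Theta hL hT h (p.1, r)) volume 0 s :=
    fun h s => ((Theta_cont hL hT h).comp (continuous_const.prodMk continuous_id)).intervalIntegrable _ _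
  have houter : ∀ h : X, IntervalIntegrable (fun s => ∫ r in (0:ℝ)..s, Theta hL hT h (p.1, r))
      volume 0 (clamp 0 T hT p.2) := fun h =>
    (((cont_inner (Theta_cont hL hT h)).comp
      (continuous_const.prodMk continuous_id))).intervalIntegrable _ _
  have hsub : Psi0 hL hT c f p - Psi0 hL hT c g p
      = c * ∫ s in (0:ℝ)..clamp 0 T hT p.2, ∫ r in (0:ℝ)..s,
          (Theta hL hT f (p.1, r) - Theta hL hT g (p.1, r)) := by
    rw [Psi0, Psi0]
    have e1 : ∀ s : ℝ, ∫ r in (0:ℝ)..s, (Theta hL hT f (p.1, r) - Theta hL hT g (p.1, r))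
        = (∫ r in (0:ℝ)..s, Theta hL hT f (p.1, r)) - ∫ r in (0:ℝ)..s, Theta hL hT g (p.1, r) :=
      fun s => intervalIntegral.integral_sub (hfint f s) (hfint g s)
    have e2 : ∫ s in (0:ℝ)..clamp 0 T hT p.2, ∫ r in (0:ℝ)..s,
          (Theta hL hT f (p.1, r) - Theta hL hT g (p.1, r))
        = (∫ s in (0:ℝ)..clamp 0 T hT p.2, ∫ r in (0:ℝ)..s, Theta hL hT f (p.1, r))
          - ∫ s in (0:ℝ)..clamp 0 T hT p.2, ∫ r in (0:ℝ)..s, Theta hL hT g (p.1, r) := by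
      rw [intervalIntegral.integral_congr (g := fun s =>
          (∫ r in (0:ℝ)..s, Theta hL hT f (p.1, r)) - ∫ r in (0:ℝ)..s, Theta hL hT g (p.1, r))
          (fun s _ => e1 s)]
      exact intervalIntegral.integral_sub (houter f) (houter g)
    rw [e2]; ring
  rw [hsub, abs_mul, abs_of_nonneg hc]
  have hdb := double_bound (G := fun r => Theta hL hT f (p.1, r) - Theta hL hT g (p.1, r))
    (Cg := Real.exp (L₃ - L₂) * (dist f g * (L₃ - L₂))) hm.1
    (fun r _ => Theta_dist hL hT f g _)
  have h2 : (clamp 0 T hT p.2) ^ 2 ≤ T ^ 2 := pow_le_pow_left₀ hm.1 hm.2 2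
  have hCg : 0 ≤ Real.exp (L₃ - L₂) * (dist f g * (L₃ - L₂)) :=
    mul_nonneg (Real.exp_nonneg _) (mul_nonneg dist_nonneg (by linarith))
  calc c * |∫ s in (0:ℝ)..clamp 0 T hT p.2, ∫ r in (0:ℝ)..s,
        (Theta hL hT f (p.1, r) - Theta hL hT g (p.1, r))|
      ≤ c * (Real.exp (L₃ - L₂) * (dist f g * (L₃ - L₂)) * (clamp 0 T hT p.2) ^ 2) :=
        mul_le_mul_of_nonneg_left hdb hc
    _ ≤ c * (Real.exp (L₃ - L₂) * (dist f g * (L₃ - L₂)) * T ^ 2) :=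
        mul_le_mul_of_nonneg_left (mul_le_mul_of_nonneg_left h2 hCg) hc
    _ = c * (Real.exp (L₃ - L₂) * (dist f g * (L₃ - L₂))) * T ^ 2 := by ring

/-- the Picard operator as a self-map of bounded continuous functions -/
def Psi (c : ℝ) (hc : 0 ≤ c) : X → X := fun f =>
  BoundedContinuousFunction.ofNormedAddCommGroup (Psi0 hL hT c f) (Psi0_cont hL hT c f)
    _ (Psi0_norm hL hT c hc f)

lemma Psi_apply (c : ℝ) (hc : 0 ≤ c) (f : X) (p : ℝ × ℝ) :
    Psi hL hT c hc f p = Psi0 hL hT c f p := rfl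

end
end IntEqWP

namespace IntEqWP
open BoundedContinuousFunction

lemma existence {L₂ L₃ c : ℝ} (hL : L₂ < L₃) (hc : 0 < c) :
    ∃ T : ℝ, 0 < T ∧ ∃ f : ℝ → ℝ → ℝ,
      (ContinuousOn (fun p : ℝ × ℝ => f p.1 p.2) (Set.Icc L₂ L₃ ×ˢ Set.Ico 0 T)) ∧
      ∀ z ∈ Set.Icc L₂ L₃, ∀ t ∈ Set.Ico (0:ℝ) T,
        f z t = 1 / 2 + c * ∫ s in (0:ℝ)..t, ∫ r in (0:ℝ)..s,
          Real.exp (∫ y in L₂..z, f y r) := by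
  have hL' : L₂ ≤ L₃ := hL.le
  set Δ := L₃ - L₂ with hΔdef
  have hΔ : 0 < Δ := by simp only [hΔdef]; linarith
  set E := Real.exp Δ with hEdef
  have hE : 0 < E := Real.exp_pos Δ
  have hden : (0:ℝ) < 4 * c * E * (1 + Δ) := by positivity
  set T := min 1 (1 / (4 * c * E * (1 + Δ))) with hTdef
  have hT : 0 < T := lt_min one_pos (by positivity)
  have hT' : (0:ℝ) ≤ T := hT.le
  have hT1 : T ≤ 1 := min_le_left _ _
  have hT2 : T * (4 * c * E * (1 + Δ)) ≤ 1 := by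
    have h := min_le_right 1 (1 / (4 * c * E * (1 + Δ)))
    calc T * (4 * c * E * (1 + Δ))
        ≤ (1 / (4 * c * E * (1 + Δ))) * (4 * c * E * (1 + Δ)) :=
          mul_le_mul_of_nonneg_right h hden.le
      _ = 1 := by field_simp
  have hkey : c * E * (1 + Δ) * T ^ 2 ≤ 1 / 4 := by
    have h1 : T * (4 * c * E * (1 + Δ)) * T ≤ 1 * T := mul_le_mul_of_nonneg_right hT2 hT'
    nlinarith [h1, hT1]
  have hKle : c * E * Δ * T ^ 2 ≤ 1 / 4 := by
    nlinarith [hkey, mul_nonneg (mul_nonneg hc.le hE.le) (sq_nonneg T)]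
  have hEb : c * E * T ^ 2 ≤ 1 / 4 := by
    nlinarith [hkey, mul_nonneg (mul_nonneg (mul_nonneg hc.le hE.le) hΔ.le) (sq_nonneg T)]
  set Ψ : X → X := Psi (L₂ := L₂) (L₃ := L₃) (T := T) hL' hT' c hc.le with hΨdef
  have hcontr : ∀ f g : X, dist (Ψ f) (Ψ g) ≤ (c * E * Δ * T ^ 2) * dist f g := by
    intro f g
    rw [BoundedContinuousFunction.dist_le (mul_nonneg (by positivity) dist_nonneg)]
    intro p
    rw [Real.dist_eq, hΨdef, Psi_apply, Psi_apply]
    calc |Psi0 hL' hT' c f p - Psi0 hL' hT' c g p|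
        ≤ c * (E * (dist f g * Δ)) * T ^ 2 := Psi0_dist hL' hT' c hc.le f g p
      _ = (c * E * Δ * T ^ 2) * dist f g := by ring
  set K : NNReal := Real.toNNReal (c * E * Δ * T ^ 2) with hKdef
  have hKco : (K : ℝ) = c * E * Δ * T ^ 2 := Real.coe_toNNReal _ (by positivity)
  have hlip : LipschitzWith K Ψ := by
    apply LipschitzWith.of_dist_le_mul
    intro f g
    rw [hKco]
    exact hcontr f g
  have hcw : ContractingWith K Ψ := by
    constructor
    · have : (K : ℝ) < 1 := by
        rw [hKco]
        exact lt_of_le_of_lt hKle (by norm_num)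
      exact_mod_cast this
    · exact hlip
  set f₀ : X := ContractingWith.fixedPoint Ψ hcw with hf₀def
  have hfix : Ψ f₀ = f₀ := hcw.fixedPoint_isFixedPt
  set o : X := BoundedContinuousFunction.const (ℝ × ℝ) (1/2 : ℝ) with hodef
  have hDo : dist (Ψ o) o ≤ 1 / 4 := by
    rw [BoundedContinuousFunction.dist_le (by norm_num)]
    intro p
    rw [Real.dist_eq, hΨdef, Psi_apply]
    have ho2 : o p = 1/2 := rfl
    have hsub : Psi0 hL' hT' c o p - o p
        = c * ∫ s in (0:ℝ)..clamp 0 T hT' p.2, ∫ r in (0:ℝ)..s, Theta hL' hT' o (p.1, r) := by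
      rw [ho2, Psi0]; ring
    rw [hsub, abs_mul, abs_of_nonneg hc.le]
    have hm := clamp_mem 0 T hT' p.2
    have hdb := double_bound hm.1 (fun r _ => Theta_le hL' hT' o (p.1, r))
    have h2 : (clamp 0 T hT' p.2) ^ 2 ≤ T ^ 2 := pow_le_pow_left₀ hm.1 hm.2 2
    calc c * |∫ s in (0:ℝ)..clamp 0 T hT' p.2, ∫ r in (0:ℝ)..s, Theta hL' hT' o (p.1, r)|
        ≤ c * (E * T ^ 2) := by
          apply mul_le_mul_of_nonneg_left _ hc.le
          exact hdb.trans (mul_le_mul_of_nonneg_left h2 hE.le)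
      _ ≤ 1 / 4 := by nlinarith [hEb]
  have hdist : dist f₀ o ≤ 1 / 3 := by
    have h1 : dist f₀ o ≤ dist f₀ (Ψ o) + dist (Ψ o) o := dist_triangle _ _ _
    have h2 : dist f₀ (Ψ o) = dist (Ψ f₀) (Ψ o) := by rw [hfix]
    have h3 : dist (Ψ f₀) (Ψ o) ≤ (c * E * Δ * T ^ 2) * dist f₀ o := hcontr f₀ o
    have h4 : (0:ℝ) ≤ dist f₀ o := dist_nonneg
    nlinarith [mul_le_mul_of_nonneg_right hKle h4]
  have hb1 : ∀ q : ℝ × ℝ, |f₀ q| ≤ 1 := by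
    intro q
    have h := BoundedContinuousFunction.dist_coe_le_dist (f := f₀) (g := o) q
    rw [Real.dist_eq] at h
    have ho2 : o q = 1/2 := rfl
    rw [ho2] at h
    have h5 : |f₀ q - 1/2| ≤ 1/3 := h.trans hdist
    rw [abs_le] at h5 ⊢
    constructor <;> linarith [h5.1, h5.2]
  refine ⟨T, hT, fun z t => f₀ (clamp L₂ L₃ hL' z, clamp 0 T hT' t), ?_, ?_⟩
  · exact (f₀.continuous.comp (((clamp_cont _ _ hL').comp continuous_fst).prodMk
      ((clamp_cont _ _ hT').comp continuous_snd))).continuousOn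
  · intro z hz t ht
    have htI : t ∈ Set.Icc (0:ℝ) T := ⟨ht.1, ht.2.le⟩
    have hfzt : f₀ (clamp L₂ L₃ hL' z, clamp 0 T hT' t) = f₀ (z, t) := by
      rw [clamp_eq hL' hz, clamp_eq hT' htI]
    have hg : ∀ r : ℝ, Theta hL' hT' f₀ (z, r)
        = Real.exp (∫ y in L₂..z, f₀ (clamp L₂ L₃ hL' y, clamp 0 T hT' r)) := by
      intro r
      have hIt : It hL' hT' f₀ z r
          = ∫ y in L₂..z, f₀ (clamp L₂ L₃ hL' y, clamp 0 T hT' r) := by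
        rw [It, clamp_eq hL' hz]
      have hItb := It_le hL' hT' f₀ zero_le_one hb1 z r
      have hmin : min (L₃ - L₂) (It hL' hT' f₀ z r) = It hL' hT' f₀ z r := by
        apply min_eq_right
        calc It hL' hT' f₀ z r ≤ |It hL' hT' f₀ z r| := le_abs_self _
          _ ≤ 1 * (L₃ - L₂) := hItb
          _ = L₃ - L₂ := one_mul _
      rw [Theta]
      show Real.exp (min (L₃ - L₂) (It hL' hT' f₀ z r)) = _
      rw [hmin, hIt]
    have hcollapse : (∫ s in (0:ℝ)..t, ∫ r in (0:ℝ)..s, Theta hL' hT' f₀ (z, r))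
        = ∫ s in (0:ℝ)..t, ∫ r in (0:ℝ)..s,
            Real.exp (∫ y in L₂..z, f₀ (clamp L₂ L₃ hL' y, clamp 0 T hT' r)) :=
      intervalIntegral.integral_congr fun s _ =>
        intervalIntegral.integral_congr fun r _ => hg r
    have happ : f₀ (z, t) = Psi0 hL' hT' c f₀ (z, t) := by
      conv_lhs => rw [← hfix]
      rw [hΨdef, Psi_apply]
    have happ2 : Psi0 hL' hT' c f₀ (z, t)
        = 1/2 + c * ∫ s in (0:ℝ)..clamp 0 T hT' t, ∫ r in (0:ℝ)..s,
            Theta hL' hT' f₀ (z, r) := rfl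
    show f₀ (clamp L₂ L₃ hL' z, clamp 0 T hT' t) = _
    rw [hfzt, happ, happ2, clamp_eq hT' htI, hcollapse]

end IntEqWP

namespace IntEqWP

/-- evaluate a continuous function of one slot of an interval integral -/
lemma cont_I' {G : ℝ × ℝ → ℝ} (hG : Continuous G) (L₂ z : ℝ) :
    Continuous fun r : ℝ => ∫ y in L₂..z, G (y, r) := by
  apply intervalIntegral.continuous_parametric_intervalIntegral_of_continuous
    (f := fun (r : ℝ) y => G (y, r)) ?_ (continuous_const (y := z))
  exact hG.comp (continuous_snd.prodMk continuous_fst)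

/-- clamped extension of a two-variable function -/
noncomputable def ext2 (L₂ L₃ T' : ℝ) (hL : L₂ ≤ L₃) (hT : (0:ℝ) ≤ T') (f : ℝ → ℝ → ℝ) : ℝ × ℝ → ℝ :=
  fun p => f (clamp L₂ L₃ hL p.1) (clamp 0 T' hT p.2)

lemma ext2_cont {L₂ L₃ T' : ℝ} (hL : L₂ ≤ L₃) (hT : (0:ℝ) ≤ T') {f : ℝ → ℝ → ℝ}
    (hfc : ContinuousOn (fun p : ℝ × ℝ => f p.1 p.2) (Set.Icc L₂ L₃ ×ˢ Set.Icc 0 T')) :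
    Continuous (ext2 L₂ L₃ T' hL hT f) := by
  apply hfc.comp_continuous
    (((clamp_cont _ _ hL).comp continuous_fst).prodMk ((clamp_cont _ _ hT).comp continuous_snd))
  intro p
  exact Set.mem_prod.2 ⟨clamp_mem _ _ hL p.1, clamp_mem _ _ hT p.2⟩

lemma ext2_eq {L₂ L₃ T' : ℝ} (hL : L₂ ≤ L₃) (hT : (0:ℝ) ≤ T') (f : ℝ → ℝ → ℝ)
    {z t : ℝ} (hz : z ∈ Set.Icc L₂ L₃) (ht : t ∈ Set.Icc (0:ℝ) T') :
    ext2 L₂ L₃ T' hL hT f (z, t) = f z t := by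
  rw [ext2]
  show f (clamp L₂ L₃ hL z) (clamp 0 T' hT t) = f z t
  rw [clamp_eq hL hz, clamp_eq hT ht]

lemma eq_rewrite {L₂ L₃ c T' : ℝ} (hL : L₂ ≤ L₃) (hT : (0:ℝ) ≤ T') {f : ℝ → ℝ → ℝ}
    {F : ℝ × ℝ → ℝ}
    (hFf : ∀ z ∈ Set.Icc L₂ L₃, ∀ t ∈ Set.Icc (0:ℝ) T', F (z, t) = f z t)
    (hfe : ∀ z ∈ Set.Icc L₂ L₃, ∀ t ∈ Set.Icc (0:ℝ) T',
      f z t = 1 / 2 + c * ∫ s in (0:ℝ)..t, ∫ r in (0:ℝ)..s,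
        Real.exp (∫ y in L₂..z, f y r)) :
    ∀ z ∈ Set.Icc L₂ L₃, ∀ t ∈ Set.Icc (0:ℝ) T',
      f z t = 1 / 2 + c * ∫ s in (0:ℝ)..t, ∫ r in (0:ℝ)..s,
        Real.exp (∫ y in L₂..z, F (y, r)) := by
  intro z hz t ht
  rw [hfe z hz t ht]
  have h : (∫ s in (0:ℝ)..t, ∫ r in (0:ℝ)..s, Real.exp (∫ y in L₂..z, f y r))
      = ∫ s in (0:ℝ)..t, ∫ r in (0:ℝ)..s, Real.exp (∫ y in L₂..z, F (y, r)) := by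
    refine intervalIntegral.integral_congr (μ := volume) (fun s hs => ?_)
    rw [uIcc_of_le ht.1] at hs
    refine intervalIntegral.integral_congr (μ := volume) (fun r hr => ?_)
    rw [uIcc_of_le hs.1] at hr
    have hr2 : r ∈ Set.Icc (0:ℝ) T' := ⟨hr.1, hr.2.trans (hs.2.trans ht.2)⟩
    congr 1
    refine intervalIntegral.integral_congr (μ := volume) (fun y hy => ?_)
    rw [uIcc_of_le hz.1] at hy
    exact (hFf y ⟨hy.1, hy.2.trans hz.2⟩ r hr2).symm
  rw [h]

lemma uniqueness {L₂ L₃ c : ℝ} (hL : L₂ < L₃) (hc : 0 < c) {T' : ℝ} (hT'pos : 0 < T')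
    {f g : ℝ → ℝ → ℝ}
    (hfc : ContinuousOn (fun p : ℝ × ℝ => f p.1 p.2) (Set.Icc L₂ L₃ ×ˢ Set.Icc 0 T'))
    (hfe : ∀ z ∈ Set.Icc L₂ L₃, ∀ t ∈ Set.Icc (0:ℝ) T',
      f z t = 1 / 2 + c * ∫ s in (0:ℝ)..t, ∫ r in (0:ℝ)..s,
        Real.exp (∫ y in L₂..z, f y r))
    (hgc : ContinuousOn (fun p : ℝ × ℝ => g p.1 p.2) (Set.Icc L₂ L₃ ×ˢ Set.Icc 0 T'))
    (hge : ∀ z ∈ Set.Icc L₂ L₃, ∀ t ∈ Set.Icc (0:ℝ) T',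
      g z t = 1 / 2 + c * ∫ s in (0:ℝ)..t, ∫ r in (0:ℝ)..s,
        Real.exp (∫ y in L₂..z, g y r)) :
    ∀ z ∈ Set.Icc L₂ L₃, ∀ t ∈ Set.Icc (0:ℝ) T', f z t = g z t := by
  have hL' : L₂ ≤ L₃ := hL.le
  have hT' : (0:ℝ) ≤ T' := hT'pos.le
  set F : ℝ × ℝ → ℝ := ext2 L₂ L₃ T' hL' hT' f with hFdef
  set G : ℝ × ℝ → ℝ := ext2 L₂ L₃ T' hL' hT' g with hGdef
  have hFc : Continuous F := ext2_cont hL' hT' hfc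
  have hGc : Continuous G := ext2_cont hL' hT' hgc
  have hFf : ∀ z ∈ Set.Icc L₂ L₃, ∀ t ∈ Set.Icc (0:ℝ) T', F (z, t) = f z t :=
    fun z hz t ht => ext2_eq hL' hT' f hz ht
  have hGg : ∀ z ∈ Set.Icc L₂ L₃, ∀ t ∈ Set.Icc (0:ℝ) T', G (z, t) = g z t :=
    fun z hz t ht => ext2_eq hL' hT' g hz ht
  have hfe' := eq_rewrite hL' hT' hFf hfe
  have hge' := eq_rewrite hL' hT' hGg hge
  -- uniform bounds
  obtain ⟨Mf, hMf⟩ := (isCompact_Icc.prod isCompact_Icc).exists_bound_of_continuousOn hfc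
  obtain ⟨Mg, hMg⟩ := (isCompact_Icc.prod isCompact_Icc).exists_bound_of_continuousOn hgc
  set M := max (max Mf Mg) 0 with hMdef
  have hM0 : (0:ℝ) ≤ M := le_max_right _ _
  have hMF : ∀ z ∈ Set.Icc L₂ L₃, ∀ t ∈ Set.Icc (0:ℝ) T', |f z t| ≤ M := by
    intro z hz t ht
    have h := hMf (z, t) (Set.mem_prod.2 ⟨hz, ht⟩)
    rw [Real.norm_eq_abs] at h
    exact h.trans ((le_max_left Mf Mg).trans (le_max_left _ _))
  have hMG : ∀ z ∈ Set.Icc L₂ L₃, ∀ t ∈ Set.Icc (0:ℝ) T', |g z t| ≤ M := by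
    intro z hz t ht
    have h := hMg (z, t) (Set.mem_prod.2 ⟨hz, ht⟩)
    rw [Real.norm_eq_abs] at h
    exact h.trans ((le_max_right Mf Mg).trans (le_max_left _ _))
  set K₁ := M * (L₃ - L₂) with hK₁def
  set E₁ := Real.exp K₁ with hE₁def
  have hE₁0 : (0:ℝ) < E₁ := Real.exp_pos _
  set A := c * E₁ * (L₃ - L₂) with hAdef
  have hA0 : (0:ℝ) ≤ A := by
    apply mul_nonneg (mul_nonneg hc.le hE₁0.le); linarith
  set B := 2 * M with hBdef
  have hB0 : (0:ℝ) ≤ B := by rw [hBdef]; linarith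
  set Cc := A * T' with hCcdef
  have hCc0 : (0:ℝ) ≤ Cc := mul_nonneg hA0 hT'
  -- bound on inner spatial integrals
  have hIF : ∀ z ∈ Set.Icc L₂ L₃, ∀ r ∈ Set.Icc (0:ℝ) T', |∫ y in L₂..z, F (y, r)| ≤ K₁ := by
    intro z hz r hr
    have h1 : |∫ y in L₂..z, F (y, r)| ≤ M * |z - L₂| := by
      rw [← Real.norm_eq_abs]
      apply intervalIntegral.norm_integral_le_of_norm_le_const
      intro y hy
      rw [uIoc_of_le hz.1] at hy
      have hy2 : y ∈ Set.Icc L₂ L₃ := ⟨hy.1.le, hy.2.trans hz.2⟩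
      rw [Real.norm_eq_abs, hFf y hy2 r hr]
      exact hMF y hy2 r hr
    refine h1.trans ?_
    rw [hK₁def, abs_of_nonneg (by linarith [hz.1])]
    exact mul_le_mul_of_nonneg_left (by linarith [hz.2]) hM0
  have hIG : ∀ z ∈ Set.Icc L₂ L₃, ∀ r ∈ Set.Icc (0:ℝ) T', |∫ y in L₂..z, G (y, r)| ≤ K₁ := by
    intro z hz r hr
    have h1 : |∫ y in L₂..z, G (y, r)| ≤ M * |z - L₂| := by
      rw [← Real.norm_eq_abs]
      apply intervalIntegral.norm_integral_le_of_norm_le_const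
      intro y hy
      rw [uIoc_of_le hz.1] at hy
      have hy2 : y ∈ Set.Icc L₂ L₃ := ⟨hy.1.le, hy.2.trans hz.2⟩
      rw [Real.norm_eq_abs, hGg y hy2 r hr]
      exact hMG y hy2 r hr
    refine h1.trans ?_
    rw [hK₁def, abs_of_nonneg (by linarith [hz.1])]
    exact mul_le_mul_of_nonneg_left (by linarith [hz.2]) hM0
  -- the key iterated estimate
  have key : ∀ n : ℕ, ∀ z ∈ Set.Icc L₂ L₃, ∀ t ∈ Set.Icc (0:ℝ) T',
      |f z t - g z t| ≤ B * Cc ^ n * t ^ n / (n.factorial : ℝ) := by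
    intro n
    induction n with
    | zero =>
      intro z hz t ht
      simp only [pow_zero, Nat.factorial_zero, Nat.cast_one, mul_one, div_one]
      calc |f z t - g z t| ≤ |f z t| + |g z t| := abs_sub _ _
        _ ≤ M + M := add_le_add (hMF z hz t ht) (hMG z hz t ht)
        _ = B := by rw [hBdef]; ring
    | succ n ih =>
      intro z hz t ht
      have ht0 : (0:ℝ) ≤ t := ht.1
      have hnf : (0:ℝ) < (n.factorial : ℝ) := by exact_mod_cast n.factorial_pos
      set Q := E₁ * (L₃ - L₂) * (B * Cc ^ n / (n.factorial : ℝ)) with hQdef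
      have hQ0 : (0:ℝ) ≤ Q := by
        apply mul_nonneg (mul_nonneg hE₁0.le (by linarith))
        positivity
      have hEFc : Continuous fun r : ℝ => Real.exp (∫ y in L₂..z, F (y, r)) :=
        Real.continuous_exp.comp (cont_I' hFc L₂ z)
      have hEGc : Continuous fun r : ℝ => Real.exp (∫ y in L₂..z, G (y, r)) :=
        Real.continuous_exp.comp (cont_I' hGc L₂ z)
      -- pointwise estimate on the integrand difference
      have hEbd : ∀ r ∈ Set.Icc (0:ℝ) t,
          |Real.exp (∫ y in L₂..z, F (y, r)) - Real.exp (∫ y in L₂..z, G (y, r))|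
            ≤ Q * r ^ n := by
        intro r hr
        have hr2 : r ∈ Set.Icc (0:ℝ) T' := ⟨hr.1, hr.2.trans ht.2⟩
        have e1 : |Real.exp (∫ y in L₂..z, F (y, r)) - Real.exp (∫ y in L₂..z, G (y, r))|
            ≤ E₁ * |(∫ y in L₂..z, F (y, r)) - ∫ y in L₂..z, G (y, r)| :=
          exp_lip ((le_abs_self _).trans (hIF z hz r hr2))
            ((le_abs_self _).trans (hIG z hz r hr2))
        have hFint : IntervalIntegrable (fun y => F (y, r)) volume L₂ z :=
          (hFc.comp (continuous_id.prodMk continuous_const)).intervalIntegrable _ _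
        have hGint : IntervalIntegrable (fun y => G (y, r)) volume L₂ z :=
          (hGc.comp (continuous_id.prodMk continuous_const)).intervalIntegrable _ _
        have e2 : (∫ y in L₂..z, F (y, r)) - ∫ y in L₂..z, G (y, r)
            = ∫ y in L₂..z, (F (y, r) - G (y, r)) :=
          (intervalIntegral.integral_sub hFint hGint).symm
        have e3 : |∫ y in L₂..z, (F (y, r) - G (y, r))|
            ≤ (B * Cc ^ n * r ^ n / (n.factorial : ℝ)) * |z - L₂| := by
          rw [← Real.norm_eq_abs]
          apply intervalIntegral.norm_integral_le_of_norm_le_const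
          intro y hy
          rw [uIoc_of_le hz.1] at hy
          have hy2 : y ∈ Set.Icc L₂ L₃ := ⟨hy.1.le, hy.2.trans hz.2⟩
          rw [Real.norm_eq_abs, hFf y hy2 r hr2, hGg y hy2 r hr2]
          exact ih y hy2 r hr2
        have e4 : (B * Cc ^ n * r ^ n / (n.factorial : ℝ)) * |z - L₂|
            ≤ (B * Cc ^ n * r ^ n / (n.factorial : ℝ)) * (L₃ - L₂) := by
          apply mul_le_mul_of_nonneg_left
          · rw [abs_of_nonneg (by linarith [hz.1])]; linarith [hz.2]
          · have : (0:ℝ) ≤ r ^ n := pow_nonneg hr.1 n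
            positivity
        calc |Real.exp (∫ y in L₂..z, F (y, r)) - Real.exp (∫ y in L₂..z, G (y, r))|
            ≤ E₁ * |(∫ y in L₂..z, F (y, r)) - ∫ y in L₂..z, G (y, r)| := e1
          _ ≤ E₁ * ((B * Cc ^ n * r ^ n / (n.factorial : ℝ)) * (L₃ - L₂)) := by
              apply mul_le_mul_of_nonneg_left _ hE₁0.le
              rw [e2]
              exact e3.trans e4
          _ = Q * r ^ n := by rw [hQdef]; ring
      -- the difference satisfies the integral identity
      have hinner : ∀ s : ℝ,
          (∫ r in (0:ℝ)..s, (Real.exp (∫ y in L₂..z, F (y, r))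
            - Real.exp (∫ y in L₂..z, G (y, r))))
          = (∫ r in (0:ℝ)..s, Real.exp (∫ y in L₂..z, F (y, r)))
            - ∫ r in (0:ℝ)..s, Real.exp (∫ y in L₂..z, G (y, r)) :=
        fun s => intervalIntegral.integral_sub (hEFc.intervalIntegrable _ _)
          (hEGc.intervalIntegrable _ _)
      have hprimF : Continuous fun s : ℝ =>
          ∫ r in (0:ℝ)..s, Real.exp (∫ y in L₂..z, F (y, r)) :=
        intervalIntegral.continuous_primitive (fun a b => hEFc.intervalIntegrable a b) 0
      have hprimG : Continuous fun s : ℝ =>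
          ∫ r in (0:ℝ)..s, Real.exp (∫ y in L₂..z, G (y, r)) :=
        intervalIntegral.continuous_primitive (fun a b => hEGc.intervalIntegrable a b) 0
      have hsplit : f z t - g z t = c * ∫ s in (0:ℝ)..t, ∫ r in (0:ℝ)..s,
          (Real.exp (∫ y in L₂..z, F (y, r)) - Real.exp (∫ y in L₂..z, G (y, r))) := by
        rw [hfe' z hz t ht, hge' z hz t ht]
        have e5 : (∫ s in (0:ℝ)..t, ∫ r in (0:ℝ)..s,
              (Real.exp (∫ y in L₂..z, F (y, r)) - Real.exp (∫ y in L₂..z, G (y, r))))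
            = (∫ s in (0:ℝ)..t, ∫ r in (0:ℝ)..s, Real.exp (∫ y in L₂..z, F (y, r)))
              - ∫ s in (0:ℝ)..t, ∫ r in (0:ℝ)..s, Real.exp (∫ y in L₂..z, G (y, r)) := by
          rw [intervalIntegral.integral_congr (g := fun s =>
              (∫ r in (0:ℝ)..s, Real.exp (∫ y in L₂..z, F (y, r)))
                - ∫ r in (0:ℝ)..s, Real.exp (∫ y in L₂..z, G (y, r)))
              (fun s _ => hinner s)]
          exact intervalIntegral.integral_sub (hprimF.intervalIntegrable _ _)
            (hprimG.intervalIntegrable _ _)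
        rw [e5]; ring
      -- inner bound
      have hDbd : ∀ s ∈ Set.Ioc (0:ℝ) t,
          |∫ r in (0:ℝ)..s, (Real.exp (∫ y in L₂..z, F (y, r))
            - Real.exp (∫ y in L₂..z, G (y, r)))|
          ≤ (Q / ((n:ℝ) + 1)) * s ^ (n + 1) := by
        intro s hs
        have hb : ∀ᵐ r ∂(volume.restrict (Set.uIoc (0:ℝ) s)),
            ‖Real.exp (∫ y in L₂..z, F (y, r)) - Real.exp (∫ y in L₂..z, G (y, r))‖
              ≤ Q * r ^ n := by
          refine (ae_restrict_mem measurableSet_uIoc).mono ?_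
          intro r hr
          rw [uIoc_of_le hs.1.le] at hr
          rw [Real.norm_eq_abs]
          exact hEbd r ⟨hr.1.le, hr.2.trans hs.2⟩
        have hint : IntervalIntegrable (fun r : ℝ => Q * r ^ n) volume 0 s :=
          (continuous_const.mul (continuous_pow n)).intervalIntegrable _ _
        have h := intervalIntegral.norm_integral_le_abs_of_norm_le hb hint
        rw [Real.norm_eq_abs] at h
        refine h.trans (le_of_eq ?_)
        rw [intervalIntegral.integral_const_mul, integral_pow,
          zero_pow (Nat.succ_ne_zero n), sub_zero]
        rw [abs_of_nonneg (mul_nonneg hQ0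
          (div_nonneg (pow_nonneg hs.1.le _) (by positivity)))]
        ring
      -- outer bound
      have htot : |∫ s in (0:ℝ)..t, ∫ r in (0:ℝ)..s,
          (Real.exp (∫ y in L₂..z, F (y, r)) - Real.exp (∫ y in L₂..z, G (y, r)))|
          ≤ (Q / ((n:ℝ) + 1)) / ((n:ℝ) + 2) * t ^ (n + 2) := by
        have hb : ∀ᵐ s ∂(volume.restrict (Set.uIoc (0:ℝ) t)),
            ‖∫ r in (0:ℝ)..s, (Real.exp (∫ y in L₂..z, F (y, r))
              - Real.exp (∫ y in L₂..z, G (y, r)))‖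
              ≤ (Q / ((n:ℝ) + 1)) * s ^ (n + 1) := by
          refine (ae_restrict_mem measurableSet_uIoc).mono ?_
          intro s hs
          rw [uIoc_of_le ht0] at hs
          rw [Real.norm_eq_abs]
          exact hDbd s hs
        have hint : IntervalIntegrable (fun s : ℝ => (Q / ((n:ℝ) + 1)) * s ^ (n + 1))
            volume 0 t :=
          (continuous_const.mul (continuous_pow (n + 1))).intervalIntegrable _ _
        have h := intervalIntegral.norm_integral_le_abs_of_norm_le hb hint
        rw [Real.norm_eq_abs] at h
        refine h.trans (le_of_eq ?_)
        rw [intervalIntegral.integral_const_mul, integral_pow,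
          zero_pow (Nat.succ_ne_zero (n + 1)), sub_zero]
        rw [abs_of_nonneg (mul_nonneg (by positivity)
          (div_nonneg (pow_nonneg ht0 _) (by positivity)))]
        push_cast
        ring
      -- put everything together
      have hfact : (((n + 1).factorial : ℕ) : ℝ) = ((n:ℝ) + 1) * (n.factorial : ℝ) := by
        push_cast [Nat.factorial_succ]; ring
      have htT : t ^ (n + 2) ≤ T' * t ^ (n + 1) := by
        have e : t ^ (n + 2) = t * t ^ (n + 1) := by ring
        rw [e]
        exact mul_le_mul_of_nonneg_right ht.2 (pow_nonneg ht0 _)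
      calc |f z t - g z t|
          = c * |∫ s in (0:ℝ)..t, ∫ r in (0:ℝ)..s,
              (Real.exp (∫ y in L₂..z, F (y, r)) - Real.exp (∫ y in L₂..z, G (y, r)))| := by
            rw [hsplit, abs_mul, abs_of_pos hc]
        _ ≤ c * ((Q / ((n:ℝ) + 1)) / ((n:ℝ) + 2) * t ^ (n + 2)) :=
            mul_le_mul_of_nonneg_left htot hc.le
        _ = (A * B * Cc ^ n * t ^ (n + 2)) / ((n.factorial : ℝ) * (((n:ℝ) + 1) * ((n:ℝ) + 2))) := by
            rw [hQdef, hAdef]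
            field_simp
        _ ≤ (B * Cc ^ (n + 1) * t ^ (n + 1)) / (((n:ℝ) + 1) * (n.factorial : ℝ)) := by
            apply div_le_div₀
            · exact mul_nonneg (mul_nonneg hB0 (pow_nonneg hCc0 _)) (pow_nonneg ht0 _)
            · calc A * B * Cc ^ n * t ^ (n + 2)
                  ≤ A * B * Cc ^ n * (T' * t ^ (n + 1)) := by
                    apply mul_le_mul_of_nonneg_left htT
                    exact mul_nonneg (mul_nonneg hA0 hB0) (pow_nonneg hCc0 n)
                _ = B * Cc ^ (n + 1) * t ^ (n + 1) := by
                    rw [hCcdef, pow_succ]; ring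
            · positivity
            · have hn0 : (0:ℝ) ≤ (n:ℝ) := n.cast_nonneg
              nlinarith [hnf]
        _ = B * Cc ^ (n + 1) * t ^ (n + 1) / (((n + 1).factorial : ℕ) : ℝ) := by
            rw [hfact]
      done
  -- conclude
  intro z hz t ht
  have hlim : Tendsto (fun n : ℕ => B * (Cc * T') ^ n / (n.factorial : ℝ)) atTop (nhds 0) := by
    have h := FloorSemiring.tendsto_pow_div_factorial_atTop (K := ℝ) (Cc * T')
    have h2 := h.const_mul B
    rw [mul_zero] at h2
    simpa [mul_div_assoc] using h2
  have hle : ∀ n : ℕ, |f z t - g z t| ≤ B * (Cc * T') ^ n / (n.factorial : ℝ) := by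
    intro n
    refine (key n z hz t ht).trans ?_
    conv_rhs => rw [mul_pow]
    have hnf : (0:ℝ) < (n.factorial : ℝ) := by exact_mod_cast n.factorial_pos
    have h3 : B * Cc ^ n * t ^ n ≤ B * (Cc ^ n * T' ^ n) := by
      have h4 : t ^ n ≤ T' ^ n := pow_le_pow_left₀ ht.1 ht.2 n
      calc B * Cc ^ n * t ^ n ≤ B * Cc ^ n * T' ^ n :=
            mul_le_mul_of_nonneg_left h4 (mul_nonneg hB0 (pow_nonneg hCc0 n))
        _ = B * (Cc ^ n * T' ^ n) := by ring
    exact (div_le_div_iff_of_pos_right hnf).2 h3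
  have h0 : |f z t - g z t| ≤ 0 := ge_of_tendsto' hlim hle
  have := abs_nonneg (f z t - g z t)
  have habs : |f z t - g z t| = 0 := le_antisymm h0 this
  have := abs_eq_zero.1 habs
  linarith [this]

end IntEqWP


/-- **Local well-posedness of the comparison integral equation (Lemma 4.5(a)).** There is
`T > 0` and a solution on `[L₂,L₃] × [0,T)`, and any two solutions on a common domain
`[L₂,L₃] × [0,T']` coincide. -/
theorem integral_equation_wellposed (L₂ L₃ c : ℝ) (hL : L₂ < L₃) (hc : 0 < c) :
    (∃ T : ℝ, 0 < T ∧ ∃ f : ℝ → ℝ → ℝ, IsSolIntEq L₂ L₃ c (Set.Ico 0 T) f) ∧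
    (∀ T' : ℝ, 0 < T' → ∀ f g : ℝ → ℝ → ℝ,
      IsSolIntEq L₂ L₃ c (Set.Icc 0 T') f → IsSolIntEq L₂ L₃ c (Set.Icc 0 T') g →
      ∀ z ∈ Set.Icc L₂ L₃, ∀ t ∈ Set.Icc (0:ℝ) T', f z t = g z t) := by
  constructor
  · obtain ⟨T, hT, f, h1, h2⟩ := IntEqWP.existence hL hc
    exact ⟨T, hT, f, h1, h2⟩
  · intro T' hT' f g hf hg
    exact IntEqWP.uniqueness hL hc hT' hf.1 hf.2 hg.1 hg.2
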